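/- Let k ≥ 1 and let G be a nearly k-regular graph on n vertices. Then W^1(G) = nk − 1, W^2(G) = (n−1)k² + (k−1)², W^3(G) = nk³ − 3k² + 2k, and W^4(G) = nk⁴ − 4k³ + 3k² + k − 1. -/

import Mathlib

open SimpleGraph

/-- `F` is contained in `G` as a subgraph (there is an injective map preserving adjacency). -/
def ContainsCopy {α β : Type*} (F : SimpleGraph α) (G : SimpleGraph β) : Prop :=
  ∃ f : α ↪ β, ∀ a b, F.Adj a b → G.Adj (f a) (f b)

/-- The join of two graphs: disjoint union plus all edges between the two parts. -/
def graphJoin {α β : Type*} (G : SimpleGraph α) (H : SimpleGraph β) :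
    SimpleGraph (α ⊕ β) where
  Adj x y :=
    match x, y with
    | Sum.inl a, Sum.inl b => G.Adj a b
    | Sum.inr a, Sum.inr b => H.Adj a b
    | Sum.inl _, Sum.inr _ => True
    | Sum.inr _, Sum.inl _ => True
  symm := ⟨by
    rintro (a | a) (b | b) h
    · exact G.adj_symm h
    · trivial
    · trivial
    · exact H.adj_symm h⟩
  loopless := ⟨by
    rintro (a | a) h
    · exact G.ne_of_adj h rfl
    · exact H.ne_of_adj h rfl⟩

/-- The fan `H_ℓ = K_1 ∨ P_ℓ`. -/
def fan (ℓ : ℕ) : SimpleGraph (Fin 1 ⊕ Fin ℓ) :=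
  graphJoin (⊤ : SimpleGraph (Fin 1)) (pathGraph ℓ)

/-- The degree of a vertex. -/
noncomputable def gdeg {V : Type*} (G : SimpleGraph V) (v : V) : ℕ :=
  (G.neighborSet v).ncard

/-- `G` is `k`-regular. -/
def IsKRegular {V : Type*} (G : SimpleGraph V) (k : ℕ) : Prop :=
  ∀ v, gdeg G v = k

/-- `G` is nearly `k`-regular: all degrees are `k` except one vertex of degree `k-1`. -/
def IsNearlyKRegular {V : Type*} (G : SimpleGraph V) (k : ℕ) : Prop :=
  ∃ u, gdeg G u = k - 1 ∧ ∀ v, v ≠ u → gdeg G v = k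

/-- The adjacency matrix of `G` over `ℝ`. -/
noncomputable def adjMat {V : Type*} (G : SimpleGraph V) : Matrix V V ℝ :=
  letI := Classical.decRel G.Adj
  G.adjMatrix ℝ

/-- The spectral radius of a graph: the largest eigenvalue of its adjacency matrix. -/
noncomputable def specRad {V : Type*} [Fintype V] (G : SimpleGraph V) : ℝ :=
  sSup {μ : ℝ | Module.End.HasEigenvalue (adjMat G).mulVecLin μ}

/-- `SPEX n F`: the `F`-free graphs on `n` vertices of maximum spectral radius. -/
def SPEX (n : ℕ) {α : Type*} (F : SimpleGraph α) : Set (SimpleGraph (Fin n)) :=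
  {G | ¬ ContainsCopy F G ∧
    ∀ H : SimpleGraph (Fin n), ¬ ContainsCopy F H → specRad H ≤ specRad G}

/-- The number of walks of length `ℓ` in `G` (sequences `v₀ v₁ ⋯ v_ℓ` of vertices with
consecutive vertices adjacent). -/
noncomputable def numWalks {V : Type*} (G : SimpleGraph V) (ℓ : ℕ) : ℕ :=
  Set.ncard {p : Fin (ℓ + 1) → V | ∀ i : Fin ℓ, G.Adj (p i.castSucc) (p i.succ)}

/-! Let `A` be the adjacency matrix, so that `W^ℓ(G) = 𝟙ᵀ Aˡ 𝟙`. Near-regularity says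
`A 𝟙 = k 𝟙 - e_u`, hence `Aˡ⁺¹ 𝟙 = k Aˡ 𝟙 - Aˡ e_u`. Summing (and using the symmetry of `A`)
gives `W^{ℓ+1} = k W^ℓ - (Aˡ 𝟙)_u`, while evaluating at `u` gives
`(Aˡ⁺¹ 𝟙)_u = k (Aˡ 𝟙)_u - (Aˡ)_{uu}`. The numbers of closed walks `(Aˡ)_{uu} = 1, 0, k - 1`
for `ℓ = 0, 1, 2` then determine `W^1, …, W^4`. -/

open Finset Matrix

namespace Matrix

variable {V R : Type*} [Fintype V] [DecidableEq V]

theorem sum_prod_apply_mul_apply_last [CommSemiring R] (A : Matrix V V R) (ℓ : ℕ) (g : V → R) :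
    ∑ p : Fin (ℓ + 1) → V, (∏ i : Fin ℓ, A (p i.castSucc) (p i.succ)) * g (p (Fin.last ℓ)) =
      ∑ v, (A ^ ℓ *ᵥ g) v := by
  induction ℓ generalizing g with
  | zero =>
    simpa using Fintype.sum_equiv (Equiv.funUnique (Fin 1) V) _ _ (fun _ => rfl)
  | succ ℓ ih =>
    rw [← Fintype.sum_equiv (Fin.snocEquiv fun _ => V) _ _ (fun _ => rfl), Fintype.sum_prod_type,
      Finset.sum_comm, pow_succ, ← mulVec_mulVec, ← ih]
    refine Finset.sum_congr rfl fun q _ => ?_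
    simp [Fin.prod_univ_castSucc, Fin.succ_castSucc, -Fin.castSucc_succ, mulVec, dotProduct,
      Finset.mul_sum, mul_assoc]

variable [CommRing R] {A : Matrix V V R} {k : R} {u : V}

theorem pow_succ_mulVec_one (h : A *ᵥ 1 = k • 1 - Pi.single u 1) (ℓ : ℕ) :
    A ^ (ℓ + 1) *ᵥ 1 = k • (A ^ ℓ *ᵥ 1) - (A ^ ℓ).col u := by
  rw [pow_succ, ← mulVec_mulVec, h, mulVec_sub, mulVec_smul, mulVec_single_one]

theorem pow_succ_mulVec_one_apply (h : A *ᵥ 1 = k • 1 - Pi.single u 1) (ℓ : ℕ) :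
    (A ^ (ℓ + 1) *ᵥ 1) u = k * (A ^ ℓ *ᵥ 1) u - (A ^ ℓ) u u := by
  simp [pow_succ_mulVec_one h]

theorem sum_pow_succ_mulVec_one (hA : A.IsSymm) (h : A *ᵥ 1 = k • 1 - Pi.single u 1) (ℓ : ℕ) :
    ∑ v, (A ^ (ℓ + 1) *ᵥ 1) v = k * ∑ v, (A ^ ℓ *ᵥ 1) v - (A ^ ℓ *ᵥ 1) u := by
  have hcol : ∑ v, (A ^ ℓ) v u = (A ^ ℓ *ᵥ 1) u := by
    simp [mulVec, dotProduct, (hA.pow ℓ).apply u]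
  simp [pow_succ_mulVec_one h, Finset.sum_sub_distrib, Finset.mul_sum, hcol]

end Matrix

namespace SimpleGraph

variable {V : Type*} [Fintype V] (G : SimpleGraph V) [DecidableRel G.Adj]

theorem natCast_numWalks [DecidableEq V] (R : Type*) [CommSemiring R] (ℓ : ℕ) :
    (numWalks G ℓ : R) = ∑ v, (G.adjMatrix R ^ ℓ *ᵥ 1) v := by
  rw [← Matrix.sum_prod_apply_mul_apply_last, numWalks, Set.ncard_eq_toFinset_card',
    Set.toFinset_ofPred, Finset.natCast_card_filter]
  simp [adjMatrix_apply, Finset.prod_boole]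

theorem gdeg_eq_degree (v : V) : gdeg G v = G.degree v := by
  rw [gdeg, Set.ncard_eq_toFinset_card', ← neighborFinset_def, card_neighborFinset_eq_degree]

variable {G}

theorem IsNearlyKRegular.exists_degree_add_one_eq {k : ℕ} (hk : 1 ≤ k) (hG : IsNearlyKRegular G k) :
    ∃ u, G.degree u + 1 = k ∧ ∀ v ≠ u, G.degree v = k := by
  obtain ⟨u, hu, hv⟩ := hG
  refine ⟨u, ?_, fun v hvu => ?_⟩
  · rw [← gdeg_eq_degree, hu]; omega
  · rw [← gdeg_eq_degree, hv v hvu]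

theorem adjMatrix_mulVec_one_eq [DecidableEq V] {R : Type*} [Ring R] {k : ℕ} {u : V}
    (hu : G.degree u + 1 = k) (hv : ∀ v ≠ u, G.degree v = k) :
    G.adjMatrix R *ᵥ 1 = (k : R) • 1 - Pi.single u 1 := by
  ext v
  rcases eq_or_ne v u with rfl | hvu
  · simp [← hu]
  · simp [hv v hvu, hvu]

end SimpleGraph

/-- the numbers of walks of lengths `1`, `2`, `3`, `4` in a nearly
`k`-regular graph on `n` vertices. -/
theorem numWalks_nearly_regular (k n : ℕ) (hk : 1 ≤ k)
    (G : SimpleGraph (Fin n)) (hG : IsNearlyKRegular G k) :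
    (numWalks G 1 : ℤ) = (n : ℤ) * k - 1 ∧
    (numWalks G 2 : ℤ) = ((n : ℤ) - 1) * (k : ℤ) ^ 2 + ((k : ℤ) - 1) ^ 2 ∧
    (numWalks G 3 : ℤ) = (n : ℤ) * (k : ℤ) ^ 3 - 3 * (k : ℤ) ^ 2 + 2 * k ∧
    (numWalks G 4 : ℤ) = (n : ℤ) * (k : ℤ) ^ 4 - 4 * (k : ℤ) ^ 3 + 3 * (k : ℤ) ^ 2
      + (k : ℤ) - 1 := by
  classical
  obtain ⟨u, hu, hv⟩ := hG.exists_degree_add_one_eq hk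
  have hrow := G.adjMatrix_mulVec_one_eq (R := ℤ) hu hv
  have sum_succ := sum_pow_succ_mulVec_one G.isSymm_adjMatrix hrow
  have apply_succ := pow_succ_mulVec_one_apply hrow
  simp only [natCast_numWalks G ℤ]
  set A := G.adjMatrix ℤ
  have S0 : ∑ v, (A ^ 0 *ᵥ 1) v = (n : ℤ) := by simp
  have T0 : (A ^ 0 *ᵥ 1) u = 1 := by simp
  have D0 : (A ^ 0) u u = 1 := by simp
  have D1 : (A ^ 1) u u = 0 := by simp [A]
  have D2 : (A ^ 2) u u = k - 1 := by
    rw [sq, adjMatrix_mul_self_apply_self, ← hu]; push_cast; ring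
  rw [sum_succ 3, sum_succ 2, sum_succ 1, sum_succ 0, apply_succ 2, apply_succ 1, apply_succ 0,
    S0, T0, D0, D1, D2]
  refine ⟨?_, ?_, ?_, ?_⟩ <;> ring
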